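/- arXiv:1203.3402 — 6 statements merged into one kernel-verified Lean document; each statement's English description precedes it below -/
import Mathlib

section
/- If M is an n×n primitive nonnegative matrix, then wexp(M) ≤ exp(M) ≤ wexp(M) + n − 1, where exp(M) is the least m with M^m entrywise positive and wexp(M) is the least m such that M^m has a positive row. -/
open Matrix

private lemma aux_pow_nonneg {n : ℕ} (M : Matrix (Fin n) (Fin n) ℝ)
    (hM : ∀ i j, 0 ≤ M i j) : ∀ m i j, 0 ≤ (M ^ m) i j := by
  intro m
  induction m with
  | zero =>
    intro i j
    by_cases h : i = j
    · simp [h, pow_zero, Matrix.one_apply]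
    · simp [pow_zero, Matrix.one_apply_ne h]
  | succ m ih =>
    intro i j
    rw [pow_succ, Matrix.mul_apply]
    exact Finset.sum_nonneg fun k _ => mul_nonneg (ih i k) (hM k j)

private lemma aux_exists_pos_of_sum_pos {n : ℕ} {f : Fin n → ℝ}
    (h : 0 < ∑ k, f k) : ∃ k, 0 < f k := by
  by_contra h'
  push_neg at h'
  have : ∑ k, f k ≤ 0 := Finset.sum_nonpos fun k _ => h' k
  linarith

private lemma aux_mul_apply_le {n : ℕ} (A B : Matrix (Fin n) (Fin n) ℝ)
    (hA : ∀ i j, 0 ≤ A i j) (hB : ∀ i j, 0 ≤ B i j) (j i l : Fin n) :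
    A j i * B i l ≤ (A * B) j l := by
  rw [Matrix.mul_apply]
  exact Finset.single_le_sum (f := fun k => A j k * B k l)
    (fun k _ => mul_nonneg (hA _ _) (hB _ _)) (Finset.mem_univ i)

/-- If `M` is an `n×n` primitive nonnegative matrix, then
`wexp M ≤ exp M ≤ wexp M + n - 1`, where `exp M` is the least `m` with `M ^ m`
entrywise positive and `wexp M` is the least `m` such that `M ^ m` has a
positive row. -/
theorem stmt0 {n : ℕ} (hn : 1 ≤ n) (M : Matrix (Fin n) (Fin n) ℝ)
    (hM : ∀ i j, 0 ≤ M i j)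
    (e w : ℕ)
    (he : IsLeast {m : ℕ | ∀ i j, 0 < (M ^ m) i j} e)
    (hw : IsLeast {m : ℕ | ∃ i, ∀ j, 0 < (M ^ m) i j} w) :
    w ≤ e ∧ e ≤ w + n - 1 := by
  have hpow := aux_pow_nonneg M hM
  have i0 : Fin n := ⟨0, hn⟩
  have hwe : w ≤ e := hw.2 ⟨i0, fun j => he.1 i0 j⟩
  refine ⟨hwe, ?_⟩
  rcases Nat.lt_or_ge n 2 with hn1 | hn2
  · -- n = 1
    have hn1' : n = 1 := by omega
    obtain ⟨i, hi⟩ := hw.1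
    have : ∀ i' j, 0 < (M ^ w) i' j := by
      intro i' j
      have : i' = i := by
        apply Fin.ext
        have := i'.isLt
        have := i.isLt
        omega
      rw [this]
      exact hi j
    have : e ≤ w := he.2 this
    omega
  · -- n ≥ 2
    -- e ≥ 1
    have he1 : 1 ≤ e := by
      by_contra h
      have he0 : e = 0 := by omega
      have := he.1 (⟨0, by omega⟩ : Fin n) (⟨1, by omega⟩ : Fin n)
      rw [he0, pow_zero, Matrix.one_apply_ne (by simp [Fin.ext_iff])] at this
      exact lt_irrefl 0 this
    -- no zero columns
    have hcol : ∀ l, ∃ k, 0 < M k l := by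
      intro l
      have hpos := he.1 i0 l
      have hdecomp : M ^ e = M ^ (e - 1) * M := by
        rw [← pow_succ]
        congr 1
        omega
      rw [hdecomp, Matrix.mul_apply] at hpos
      obtain ⟨k, hk⟩ := aux_exists_pos_of_sum_pos hpos
      refine ⟨k, ?_⟩
      by_contra h'
      have : M k l = 0 := le_antisymm (not_lt.1 h') (hM k l)
      rw [this, mul_zero] at hk
      exact lt_irrefl 0 hk
    obtain ⟨i, hi⟩ := hw.1
    -- row i stays positive
    have hrow : ∀ s l, 0 < (M ^ (w + s)) i l := by
      intro s
      induction s with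
      | zero => simpa using hi
      | succ s ih =>
        intro l
        obtain ⟨k, hk⟩ := hcol l
        have h1 : (M ^ (w + s)) i k * M k l ≤ (M ^ (w + s) * M) i l :=
          aux_mul_apply_le _ _ (hpow _) hM i k l
        have h2 : 0 < (M ^ (w + s)) i k * M k l := mul_pos (ih k) hk
        have : M ^ (w + (s + 1)) = M ^ (w + s) * M := by
          rw [← pow_succ]
          rfl
        rw [this]
        linarith
    -- reachability sets
    set R : ℕ → Finset (Fin n) :=
      fun t => Finset.univ.filter (fun j => ∃ d ≤ t, 0 < (M ^ d) j i) with hRdef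
    have hmemR : ∀ t j, j ∈ R t ↔ ∃ d ≤ t, 0 < (M ^ d) j i := by
      intro t j
      simp [hRdef]
    have hRle : ∀ a b, a ≤ b → R a ⊆ R b := by
      intro a b hab j hj
      rw [hmemR] at hj ⊢
      obtain ⟨d, hd, hp⟩ := hj
      exact ⟨d, le_trans hd hab, hp⟩
    have hchar : ∀ t j, j ∈ R (t + 1) ↔ j ∈ R t ∨ ∃ k, 0 < M j k ∧ k ∈ R t := by
      intro t j
      constructor
      · intro hj
        rw [hmemR] at hj
        obtain ⟨d, hd, hp⟩ := hj
        rcases Nat.lt_or_ge d (t + 1) with h | h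
        · left; rw [hmemR]; exact ⟨d, by omega, hp⟩
        · have hdeq : d = t + 1 := by omega
          rw [hdeq, pow_succ', Matrix.mul_apply] at hp
          obtain ⟨k, hk⟩ := aux_exists_pos_of_sum_pos hp
          have hMk : 0 < M j k := by
            by_contra h'
            have : M j k = 0 := le_antisymm (not_lt.1 h') (hM j k)
            rw [this, zero_mul] at hk
            exact lt_irrefl 0 hk
          have hMt : 0 < (M ^ t) k i := by
            by_contra h'
            have : (M ^ t) k i = 0 := le_antisymm (not_lt.1 h') (hpow t k i)
            rw [this, mul_zero] at hk
            exact lt_irrefl 0 hk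
          right
          exact ⟨k, hMk, (hmemR t k).2 ⟨t, le_refl t, hMt⟩⟩
      · intro hj
        rcases hj with hj | ⟨k, hMk, hk⟩
        · exact hRle t (t + 1) (by omega) hj
        · rw [hmemR] at hk
          obtain ⟨d, hd, hp⟩ := hk
          rw [hmemR]
          refine ⟨d + 1, by omega, ?_⟩
          have h1 : M j k * (M ^ d) k i ≤ (M * M ^ d) j i :=
            aux_mul_apply_le _ _ hM (hpow _) j k i
          have h2 : 0 < M j k * (M ^ d) k i := mul_pos hMk hp
          rw [pow_succ']
          linarith
    have hfix : ∀ t, R (t + 1) = R t → ∀ s, R (t + s) = R t := by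
      intro t ht s
      induction s with
      | zero => rfl
      | succ s ih =>
        ext j
        have h1 : j ∈ R (t + (s + 1)) ↔ j ∈ R (t + s) ∨ ∃ k, 0 < M j k ∧ k ∈ R (t + s) := by
          have := hchar (t + s) j
          rwa [show t + s + 1 = t + (s + 1) by omega] at this
        rw [h1, ih]
        rw [← hchar t j, ht]
    have hRe : ∀ j, j ∈ R e := fun j => (hmemR e j).2 ⟨e, le_refl e, he.1 j i⟩
    have hRn : ∀ j, j ∈ R (n - 1) := by
      by_cases hex : ∃ t, t < n - 1 ∧ R (t + 1) = R t
      · obtain ⟨t, htlt, hteq⟩ := hex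
        have hconst : ∀ s, t ≤ s → R s = R t := by
          intro s hs
          have := hfix t hteq (s - t)
          rwa [Nat.add_sub_cancel' hs] at this
        intro j
        have hRn1 : R (n - 1) = R t := hconst (n - 1) (by omega)
        rcases le_or_gt t e with h | h
        · rw [hRn1, ← hconst e h]; exact hRe j
        · rw [hRn1]; exact hRle e t (by omega) (hRe j)
      · push_neg at hex
        have hcard : ∀ t, t ≤ n - 1 → t + 1 ≤ (R t).card := by
          intro t
          induction t with
          | zero =>
            intro _
            have hi0 : i ∈ R 0 :=
              (hmemR 0 i).2 ⟨0, le_refl 0, by simp [pow_zero, Matrix.one_apply_eq]⟩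
            exact Finset.card_pos.2 ⟨i, hi0⟩
          | succ t ih =>
            intro h
            have hne := hex t (by omega)
            have hss : R t ⊂ R (t + 1) :=
              HasSubset.Subset.ssubset_of_ne (hRle t (t + 1) (by omega))
                (fun hh => hne hh.symm)
            have h1 := Finset.card_lt_card hss
            have h2 := ih (by omega)
            omega
        have hc := hcard (n - 1) (le_refl _)
        have hcle : (R (n - 1)).card ≤ n := by
          have := Finset.card_le_univ (R (n - 1))
          simpa using this
        have huniv : R (n - 1) = Finset.univ :=
          Finset.eq_univ_of_card _ (by simp; omega)
        intro j
        rw [huniv]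
        exact Finset.mem_univ j
    apply he.2
    intro j l
    obtain ⟨d, hd, hdpos⟩ := (hmemR (n - 1) j).1 (hRn j)
    have hsplit : w + n - 1 = d + (w + (n - 1 - d)) := by omega
    rw [hsplit, pow_add]
    have h1 := aux_mul_apply_le (M ^ d) (M ^ (w + (n - 1 - d))) (hpow _) (hpow _) j i l
    have h2 : 0 < (M ^ d) j i * (M ^ (w + (n - 1 - d))) i l :=
      mul_pos hdpos (hrow (n - 1 - d) l)
    linarith
end

section
/- If M is an n×n primitive nonnegative matrix, then wexp(M) ≤ (n−1)^2. -/
open Matrix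

namespace WexpAux


variable {n : ℕ} {A : Matrix (Fin n) (Fin n) ℝ}

lemma pow_nn (hA : ∀ i j, 0 ≤ A i j) : ∀ (k : ℕ) (i j), 0 ≤ (A ^ k) i j := by
  intro k
  induction k with
  | zero =>
    intro i j
    rw [pow_zero, Matrix.one_apply]
    split <;> norm_num
  | succ k ih =>
    intro i j
    rw [pow_succ, Matrix.mul_apply]
    exact Finset.sum_nonneg fun c _ => mul_nonneg (ih i c) (hA c j)

lemma comp (hA : ∀ i j, 0 ≤ A i j) {a b : ℕ} {i k j : Fin n}
    (h1 : 0 < (A ^ a) i k) (h2 : 0 < (A ^ b) k j) : 0 < (A ^ (a + b)) i j := by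
  rw [pow_add, Matrix.mul_apply]
  exact (mul_pos h1 h2).trans_le
    (Finset.single_le_sum (fun c _ => mul_nonneg (pow_nn hA a i c) (pow_nn hA b c j))
      (Finset.mem_univ k))

lemma decomp (hA : ∀ i j, 0 ≤ A i j) {a b : ℕ} {i j : Fin n}
    (h : 0 < (A ^ (a + b)) i j) : ∃ k, 0 < (A ^ a) i k ∧ 0 < (A ^ b) k j := by
  by_contra hc
  push_neg at hc
  rw [pow_add, Matrix.mul_apply] at h
  have : ∀ c ∈ Finset.univ, (A ^ a) i c * (A ^ b) c j = 0 := by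
    intro c _
    rcases (pow_nn hA a i c).lt_or_eq with h1 | h1
    · have h2 := hc c h1
      have := pow_nn hA b c j
      have : (A ^ b) c j = 0 := le_antisymm h2 this
      rw [this, mul_zero]
    · rw [← h1, zero_mul]
  rw [Finset.sum_eq_zero this] at h
  exact lt_irrefl 0 h

lemma walk (hA : ∀ i j, 0 ≤ A i j) : ∀ (s : ℕ) (i j : Fin n), 0 < (A ^ s) i j →
    ∃ f : ℕ → Fin n, f 0 = i ∧ f s = j ∧ ∀ t < s, 0 < A (f t) (f (t + 1)) := by
  intro s
  induction s with
  | zero =>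
    intro i j h
    rw [pow_zero] at h
    have hij : i = j := by
      by_contra hne
      rw [Matrix.one_apply_ne hne] at h
      exact lt_irrefl 0 h
    exact ⟨fun _ => i, rfl, hij ▸ rfl, fun t ht => absurd ht (Nat.not_lt_zero t)⟩
  | succ s ih =>
    intro i j h
    rw [show s + 1 = 1 + s from by omega] at h
    obtain ⟨k, hk1, hk2⟩ := decomp hA h
    rw [pow_one] at hk1
    obtain ⟨f, hf0, hfs, hfst⟩ := ih k j hk2
    refine ⟨fun t => Nat.casesOn t i (fun t' => f t'), rfl, hfs, ?_⟩
    intro t ht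
    cases t with
    | zero => simpa [hf0] using hk1
    | succ t' => exact hfst t' (by omega)

lemma walk_pow (hA : ∀ i j, 0 ≤ A i j) {f : ℕ → Fin n} {a b : ℕ} (hab : a ≤ b)
    (hf : ∀ t, a ≤ t → t < b → 0 < A (f t) (f (t + 1))) :
    0 < (A ^ (b - a)) (f a) (f b) := by
  induction b, hab using Nat.le_induction with
  | base => simp [Matrix.one_apply_eq]
  | succ b hab ih =>
    have h1 : 0 < (A ^ (b - a)) (f a) (f b) := ih (fun t h1 h2 => hf t h1 (by omega))
    have h2 : 0 < (A ^ 1) (f b) (f (b + 1)) := by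
      rw [pow_one]; exact hf b hab (by omega)
    have := comp hA h1 h2
    rwa [show b - a + 1 = b + 1 - a from by omega] at this


end WexpAux

open WexpAux

/-- If `M` is an `n×n` primitive nonnegative matrix, then `wexp M ≤ (n-1)^2`,
where `wexp M` is the least `m` such that `M ^ m` has a positive row. -/
theorem stmt1 {n : ℕ} (hn : 1 ≤ n) (M : Matrix (Fin n) (Fin n) ℝ)
    (hM : ∀ i j, 0 ≤ M i j)
    (hprim : ∃ m : ℕ, ∀ i j, 0 < (M ^ m) i j)
    (w : ℕ)
    (hw : IsLeast {m : ℕ | ∃ i, ∀ j, 0 < (M ^ m) i j} w) :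
    w ≤ (n - 1) ^ 2 := by
  classical
  obtain ⟨m, hm⟩ := hprim
  have key : ∀ t : ℕ, (∃ i, ∀ j, 0 < (M ^ t) i j) → w ≤ t := fun t ht => hw.2 ht
  obtain ⟨i0, hi0⟩ : ∃ i : Fin n, (i : ℕ) = 0 := ⟨⟨0, by omega⟩, rfl⟩
  -- case n = 1
  rcases eq_or_lt_of_le hn with h1 | hn2
  · have : w ≤ 0 := by
      apply key 0
      refine ⟨i0, fun j => ?_⟩
      have hj : j = i0 := Fin.ext (by have := j.isLt; omega)
      rw [hj, pow_zero, Matrix.one_apply_eq]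
      norm_num
    omega
  -- now n ≥ 2
  rcases Nat.eq_zero_or_pos m with rfl | hm1
  · exfalso
    obtain ⟨j1, hj1⟩ : ∃ j : Fin n, (j : ℕ) = 1 := ⟨⟨1, by omega⟩, rfl⟩
    have := hm i0 j1
    rw [pow_zero, Matrix.one_apply_ne (fun h => by rw [h] at hi0; omega)] at this
    exact lt_irrefl 0 this
  -- columns of M are positive somewhere
  have col_pos : ∀ j, ∃ k, 0 < M k j := by
    intro j
    by_contra hc
    push_neg at hc
    have hcz : ∀ k, M k j = 0 := fun k => le_antisymm (hc k) (hM k j)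
    have := hm i0 j
    rw [show m = (m - 1) + 1 from by omega, pow_succ, Matrix.mul_apply] at this
    have hz : ∀ c ∈ Finset.univ, (M ^ (m - 1)) i0 c * M c j = 0 := by
      intro c _; rw [hcz c, mul_zero]
    rw [Finset.sum_eq_zero hz] at this
    exact lt_irrefl 0 this
  -- monotonicity: all powers ≥ m are positive
  have mono : ∀ r, m ≤ r → ∀ i j, 0 < (M ^ r) i j := by
    intro r hr
    induction r, hr using Nat.le_induction with
    | base => exact hm
    | succ r hr ih =>
      intro i j
      obtain ⟨k, hk⟩ := col_pos j
      have h2 : 0 < (M ^ 1) k j := by rwa [pow_one]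
      exact comp hM (ih i k) h2
  -- minimal closed walk length s
  have hex : ∃ t, 1 ≤ t ∧ ∃ v, 0 < (M ^ t) v v := ⟨m, hm1, i0, hm i0 i0⟩
  set s := Nat.find hex with hs_def
  obtain ⟨hs1, v, hv⟩ := Nat.find_spec hex
  have hmin : ∀ t, t < s → ¬ (1 ≤ t ∧ ∃ u, 0 < (M ^ t) u u) :=
    fun t ht => Nat.find_min hex ht
  -- s ≤ n
  have hsn : s ≤ n := by
    by_contra hc
    push_neg at hc
    obtain ⟨f, hf0, hfs, hfst⟩ := walk hM s v v hv
    obtain ⟨p, q, hpq, hfpq⟩ := Fintype.exists_ne_map_eq_of_card_lt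
      (fun t : Fin (n + 1) => f t) (by simp)
    rcases Ne.lt_or_gt hpq with h | h
    case _ =>
      have hww := walk_pow hM (le_of_lt h) (f := f)
        (fun t h1 h2 => hfst t (by have := q.isLt; omega))
      rw [hfpq] at hww
      exact hmin ((q : ℕ) - p) (by have := q.isLt; omega) ⟨by omega, f q, hww⟩
    case _ =>
      have hww := walk_pow hM (le_of_lt h) (f := f)
        (fun t h1 h2 => hfst t (by have := p.isLt; omega))
      rw [← hfpq] at hww
      exact hmin ((p : ℕ) - q) (by have := p.isLt; omega) ⟨by omega, f p, hww⟩
  -- s ≠ n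
  have hsne : s ≠ n := by
    intro heq
    obtain ⟨f, hf0, hfs, hfst⟩ := walk hM s v v hv
    rw [heq] at hfs hfst
    have hinj : ∀ p q : ℕ, p < q → q ≤ n → q - p < n → f p ≠ f q := by
      intro p q h1 h2 h3 hfe
      have hww := walk_pow hM (le_of_lt h1) (f := f) (fun t ht1 ht2 => hfst t (by omega))
      rw [← hfe] at hww
      exact hmin (q - p) (by omega) ⟨by omega, f p, hww⟩
    have Finj : Function.Injective (fun t : Fin n => f t) := by
      intro p q hfe
      by_contra hne
      rcases Ne.lt_or_gt (fun h : (p : ℕ) = (q : ℕ) => hne (Fin.ext h)) with h | h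
      · exact hinj p q h (le_of_lt q.isLt) (by have := q.isLt; have := p.isLt; omega) hfe
      · exact hinj q p h (le_of_lt p.isLt) (by have := q.isLt; have := p.isLt; omega) hfe.symm
    have Fbij : Function.Bijective (fun t : Fin n => f t) :=
      ⟨Finj, Finite.surjective_of_injective Finj⟩
    set e := Equiv.ofBijective _ Fbij with he_def
    have hfpos : ∀ u : Fin n, f ((e.symm u : Fin n) : ℕ) = u := fun u => by
      have : e (e.symm u) = u := e.apply_symm_apply u
      simpa [he_def, Equiv.ofBijective] using this
    set pos : Fin n → ℕ := fun u => ((e.symm u : Fin n) : ℕ) with hpos_def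
    have hpos_lt : ∀ u, pos u < n := fun u => (e.symm u).isLt
    have hfpos' : ∀ u, f (pos u) = u := hfpos
    -- the cyclic walk g
    set g : ℕ → Fin n := fun t => f (t % n) with hg_def
    have hg_step : ∀ t, 0 < M (g t) (g (t + 1)) := by
      intro t
      have hr : t % n < n := Nat.mod_lt t (by omega)
      have h1 : (t + 1) % n = (t % n + 1) % n := by
        conv_lhs => rw [Nat.add_mod]
        rw [Nat.mod_eq_of_lt (show (1 : ℕ) < n from by omega)]
      rcases Nat.lt_or_ge (t % n + 1) n with h2 | h2
      · have hh : (t + 1) % n = t % n + 1 := by rw [h1, Nat.mod_eq_of_lt h2]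
        show 0 < M (f (t % n)) (f ((t + 1) % n))
        rw [hh]
        exact hfst (t % n) hr
      · have h3 : t % n = n - 1 := by omega
        have hh : (t + 1) % n = 0 := by
          rw [h1, h3, show n - 1 + 1 = n from by omega, Nat.mod_self]
        show 0 < M (f (t % n)) (f ((t + 1) % n))
        rw [hh, h3, hf0, ← hfs]
        have := hfst (n - 1) (by omega)
        rwa [show n - 1 + 1 = n from by omega] at this
    have hgw : ∀ a b : ℕ, a ≤ b → 0 < (M ^ (b - a)) (g a) (g b) :=
      fun a b hab => walk_pow hM hab (fun t _ _ => hg_step t)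
    -- edges advance position by one mod n
    have edge : ∀ u x : Fin n, 0 < M u x → pos x ≡ pos u + 1 [MOD n] := by
      intro u x hux
      by_cases hue : u = x
      · exfalso
        refine hmin 1 (by omega) ⟨le_refl 1, u, ?_⟩
        rw [pow_one, hue]; rw [hue] at hux; exact hux
      have hjx : g (pos x) = x := by
        show f (pos x % n) = x
        rw [Nat.mod_eq_of_lt (hpos_lt x)]; exact hfpos' x
      have hij : pos u ≠ pos x := fun h => hue (by rw [← hfpos' u, ← hfpos' x, h])
      have main : ∀ b : ℕ, pos x ≤ b → b % n = pos u → ¬ (1 + (b - pos x) < n) := by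
        intro b hb1 hb2 hlt
        have hgb : g b = u := by
          show f (b % n) = u
          rw [hb2]; exact hfpos' u
        have hw2 : 0 < (M ^ (b - pos x)) x u := by
          have := hgw (pos x) b hb1; rwa [hjx, hgb] at this
        have hw1 : 0 < (M ^ 1) u x := by rwa [pow_one]
        have hcw := comp hM hw1 hw2
        exact hmin _ (by omega) ⟨by omega, u, hcw⟩
      by_cases hji : pos x < pos u
      · have h := main (pos u) (le_of_lt hji) (Nat.mod_eq_of_lt (hpos_lt u))
        have hi_lt := hpos_lt u
        show pos x % n = (pos u + 1) % n
        obtain ⟨h1, h2⟩ : pos u = n - 1 ∧ pos x = 0 := by omega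
        rw [h1, h2, show n - 1 + 1 = n from by omega, Nat.mod_self, Nat.zero_mod]
      · have h := main (pos u + n) (by have := hpos_lt x; omega)
          (by rw [Nat.add_mod_right]; exact Nat.mod_eq_of_lt (hpos_lt u))
        have hj_lt := hpos_lt x
        push_neg at hji
        show pos x % n = (pos u + 1) % n
        have hh : pos x = pos u + 1 := by omega
        rw [hh]
    -- walks advance position
    have advance : ∀ (L : ℕ) (a b : Fin n), 0 < (M ^ L) a b → pos a + L ≡ pos b [MOD n] := by
      intro L
      induction L with
      | zero =>
        intro a b h
        rw [pow_zero] at h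
        have hab : a = b := by
          by_contra hne
          rw [Matrix.one_apply_ne hne] at h
          exact lt_irrefl 0 h
        rw [hab, Nat.add_zero]
      | succ L ih =>
        intro a b h
        obtain ⟨k, hk1, hk2⟩ := decomp hM (a := L) (b := 1) h
        rw [pow_one] at hk2
        have h1 := ih a k hk1
        have h2 := edge k b hk2
        calc pos a + (L + 1) = (pos a + L) + 1 := by ring
          _ ≡ pos k + 1 [MOD n] := Nat.ModEq.add_right 1 h1
          _ ≡ pos b [MOD n] := h2.symm
    have hd1 : pos v + m ≡ pos v [MOD n] := advance m v v (hm v v)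
    have hd2 : pos v + (m + 1) ≡ pos v [MOD n] :=
      advance (m + 1) v v (mono (m + 1) (by omega) v v)
    have hn1 : n ∣ m := by
      have h' : pos v + m ≡ pos v + 0 [MOD n] := by simpa using hd1
      exact (Nat.modEq_zero_iff_dvd).mp (Nat.ModEq.add_left_cancel' (pos v) h')
    have hn2' : n ∣ m + 1 := by
      have h' : pos v + (m + 1) ≡ pos v + 0 [MOD n] := by simpa using hd2
      exact (Nat.modEq_zero_iff_dvd).mp (Nat.ModEq.add_left_cancel' (pos v) h')
    have hdvd1 : n ∣ 1 := by
      have := Nat.dvd_sub hn2' hn1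
      simpa using this
    have := Nat.le_of_dvd one_pos hdvd1
    omega
  -- now s ≤ n - 1 and (M^s) v v > 0; conclude
  have hsn1 : s ≤ n - 1 := by omega
  -- loops at v
  have loops : ∀ k : ℕ, 0 < (M ^ (s * k)) v v := by
    intro k
    induction k with
    | zero => simp [Matrix.one_apply_eq]
    | succ k ih =>
      have := comp hM ih hv
      rwa [show s * k + s = s * (k + 1) from by ring] at this
  -- for each j, minimal t with (M^(s*t)) v j > 0
  have final : ∀ j, 0 < (M ^ (s * (n - 1))) v j := by
    intro j
    have hAnn : ∀ i j, 0 ≤ (M ^ s) i j := pow_nn hM s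
    have hexd : ∃ t, 0 < (M ^ (s * t)) v j := by
      refine ⟨m, mono (s * m) ?_ v j⟩
      exact Nat.le_mul_of_pos_left m (by omega)
    set d := Nat.find hexd with hd_def
    have hd : 0 < (M ^ (s * d)) v j := Nat.find_spec hexd
    have hdmin : ∀ t, t < d → ¬ 0 < (M ^ (s * t)) v j := fun t ht => Nat.find_min hexd ht
    have hdn : d ≤ n - 1 := by
      by_contra hc
      push_neg at hc
      have hnd : n ≤ d := by omega
      rw [pow_mul] at hd
      obtain ⟨f, hf0, hfd, hfst⟩ := walk hAnn d v j hd
      obtain ⟨p, q, hpq, hfpq⟩ := Fintype.exists_ne_map_eq_of_card_lt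
        (fun t : Fin (n + 1) => f t) (by simp)
      have hsplice : ∀ p q : ℕ, p < q → q ≤ d → f p = f q → False := by
        intro p q h1 h2 hfe
        have hwa : 0 < ((M ^ s) ^ (p - 0)) (f 0) (f p) :=
          walk_pow hAnn (Nat.zero_le p) (fun t ht1 ht2 => hfst t (by omega))
        have hwb : 0 < ((M ^ s) ^ (d - q)) (f q) (f d) :=
          walk_pow hAnn h2 (fun t ht1 ht2 => hfst t (by omega))
        rw [hf0] at hwa
        rw [hfd] at hwb
        rw [← hfe] at hwb
        have hcomb := comp hAnn hwa hwb
        rw [← pow_mul] at hcomb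
        exact hdmin ((p - 0) + (d - q)) (by omega) hcomb
      rcases Ne.lt_or_gt hpq with h | h
      · exact hsplice p q h (by have := q.isLt; omega) hfpq
      · exact hsplice q p h (by have := p.isLt; omega) hfpq.symm
    -- pad with loops
    have hloop : 0 < (M ^ (s * (n - 1 - d))) v v := loops (n - 1 - d)
    have hcomb := comp hM hloop hd
    rwa [show s * (n - 1 - d) + s * d = s * (n - 1) from by
      rw [← Nat.mul_add]; congr 1; omega] at hcomb
  have hwle : w ≤ s * (n - 1) := key _ ⟨v, final⟩
  calc w ≤ s * (n - 1) := hwle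
    _ ≤ (n - 1) * (n - 1) := Nat.mul_le_mul_right _ hsn1
    _ = (n - 1) ^ 2 := (sq (n - 1)).symm
end

section
/- If A is a strongly connected synchronizing automaton, then the adjacency matrix M of its underlying digraph is primitive. -/
open Matrix

/-- The 0-1 transition matrix of a letter: `(p,q)`-entry is 1 iff `δ q a = p`. -/
def letterMat {n k : ℕ} (δ : Fin n → Fin k → Fin n) (a : Fin k) :
    Matrix (Fin n) (Fin n) ℝ :=
  fun p q => if δ q a = p then 1 else 0

/-- The action of a word on a state. -/
def act {n k : ℕ} (δ : Fin n → Fin k → Fin n) (w : List (Fin k)) (q : Fin n) : Fin n :=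
  w.foldl δ q

/-- A word is a reset word if it maps all states to one state. -/
def IsReset {n k : ℕ} (δ : Fin n → Fin k → Fin n) (w : List (Fin k)) : Prop :=
  ∀ p q : Fin n, act δ w p = act δ w q

lemma M_nonneg {n k : ℕ} (δ : Fin n → Fin k → Fin n) (p q : Fin n) :
    0 ≤ (∑ a : Fin k, letterMat δ a) p q := by
  rw [Matrix.sum_apply]
  refine Finset.sum_nonneg fun a _ => ?_
  unfold letterMat
  split <;> norm_num

lemma Mpow_nonneg {n k : ℕ} (δ : Fin n → Fin k → Fin n) (m : ℕ) (p q : Fin n) :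
    0 ≤ ((∑ a : Fin k, letterMat δ a) ^ m) p q := by
  induction m generalizing p q with
  | zero =>
    rw [pow_zero, Matrix.one_apply]
    split <;> norm_num
  | succ m ih =>
    rw [pow_succ, Matrix.mul_apply]
    exact Finset.sum_nonneg fun r _ => mul_nonneg (ih _ _) (M_nonneg δ _ _)

lemma M_pos {n k : ℕ} (δ : Fin n → Fin k → Fin n) (q : Fin n) (a : Fin k) :
    0 < (∑ a : Fin k, letterMat δ a) (δ q a) q := by
  rw [Matrix.sum_apply]
  refine Finset.sum_pos' (fun b _ => ?_) ⟨a, Finset.mem_univ a, ?_⟩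
  · unfold letterMat; split <;> norm_num
  · unfold letterMat; simp

lemma word_pos {n k : ℕ} (δ : Fin n → Fin k → Fin n) (w : List (Fin k)) (q : Fin n) :
    0 < ((∑ a : Fin k, letterMat δ a) ^ w.length) (act δ w q) q := by
  induction w generalizing q with
  | nil =>
    simp [act, Matrix.one_apply]
  | cons a w ih =>
    have hstep : act δ (a :: w) q = act δ w (δ q a) := rfl
    rw [hstep, List.length_cons, pow_succ, Matrix.mul_apply]
    refine Finset.sum_pos' (fun r _ => mul_nonneg (Mpow_nonneg δ _ _ _) (M_nonneg δ _ _))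
      ⟨δ q a, Finset.mem_univ _, mul_pos (ih _) (M_pos δ q a)⟩

/-- If `A` is a strongly connected synchronizing automaton, then the adjacency
matrix `M = Σ_a [a]` of its underlying digraph is primitive. -/
theorem stmt3 {n k : ℕ} (δ : Fin n → Fin k → Fin n)
    (hsc : ∀ p q : Fin n, ∃ w : List (Fin k), act δ w p = q)
    (hsync : ∃ w, IsReset δ w) :
    ∃ m : ℕ, ∀ i j, 0 < ((∑ a : Fin k, letterMat δ a) ^ m) i j := by
  rcases Nat.eq_zero_or_pos n with hn | hn
  · exact ⟨0, fun i j => absurd i.2 (by omega)⟩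
  rcases Nat.eq_zero_or_pos k with hk | hk
  · refine ⟨0, fun i j => ?_⟩
    have hij : i = j := by
      obtain ⟨w, hw⟩ := hsc j i
      have hwnil : w = [] := by
        cases w with
        | nil => rfl
        | cons a _ => exact absurd a.2 (by omega)
      subst hwnil
      exact hw.symm
    subst hij
    simp [Matrix.one_apply]
  obtain ⟨w0, hw0⟩ := hsync
  set q0 : Fin n := ⟨0, hn⟩
  set s := act δ w0 q0 with hs
  have hact : ∀ x, act δ w0 x = s := fun x => hw0 x q0
  choose u hu using fun i => hsc s i
  set N := Finset.univ.sup (fun i : Fin n => (u i).length) with hN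
  set a0 : Fin k := ⟨0, hk⟩
  refine ⟨N + w0.length, fun i j => ?_⟩
  set w := List.replicate (N - (u i).length) a0 ++ w0 ++ u i with hw
  have hle : (u i).length ≤ N := Finset.le_sup (f := fun i : Fin n => (u i).length) (Finset.mem_univ i)
  have hlen : w.length = N + w0.length := by
    simp [hw]
    omega
  have hactw : act δ w j = i := by
    rw [hw]
    show List.foldl δ j (List.replicate (N - (u i).length) a0 ++ w0 ++ u i) = i
    rw [List.foldl_append, List.foldl_append]
    have h1 : List.foldl δ (List.foldl δ j (List.replicate (N - (u i).length) a0)) w0 = s :=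
      hact _
    rw [h1]
    exact hu i
  have h := word_pos δ w j
  rw [hlen, hactw] at h
  exact h
end

section
/- Let A be a strongly connected synchronizing automaton, p a positive probability vector on Σ, S = Σ_a p(a)[a], and α the steady-state distribution of S. If x ∈ R^n satisfies (x, α) = 0 and v is a word of minimum length with ([v]^T x, α) > 0, then ([u]^T x, α) = 0 for every word u with |u| < |v|, and |v| ≤ n − 1. -/
/-!
Write `g u = x ⬝ᵥ [u] α`. Stationarity of `α` says that `g u` is the `p`-average of the values
`g (a :: u)`, and `g [] = 0`. By minimality of `v` these values are `≤ 0` on words shorter than `v`,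
so an average equal to `0` forces each of them to vanish, and `g` is zero below length `|v|`.

For the bound, let `W ℓ` be the span of the vectors `[u] α` with `|u| < ℓ`. Since
`[u ++ [a]] = [a] [u]`, the space `W (ℓ + 1)` is determined by `W ℓ`, so the chain
`W 0 ≤ W 1 ≤ ⋯` becomes constant once it stops growing. If it stopped before `|v| + 1`, the vector
`[v] α` would lie in `W |v|`, on which `x ⬝ᵥ ·` vanishes. Hence the chain grows strictly up to
`W (|v| + 1)`, whose dimension is at most `n`.
-/

open Matrix

/-- The matrix of a word, satisfying `[u][K] = [K·u]`. -/
def wordMat {n k : ℕ} (δ : Fin n → Fin k → Fin n) (w : List (Fin k)) :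
    Matrix (Fin n) (Fin n) ℝ :=
  (w.reverse.map (letterMat δ)).prod

open Submodule

section WordSpan

variable (K : Type*) {E ι : Type*} [Field K] [AddCommGroup E] [Module K E]

def wordSpan (f : List ι → E) (ℓ : ℕ) : Submodule K E :=
  span K (f '' {u | u.length < ℓ})

variable {K} {f : List ι → E}

theorem wordSpan_mono : Monotone (wordSpan K f) := fun _ _ h =>
  span_mono (Set.image_mono fun _ hu => lt_of_lt_of_le hu h)

theorem wordSpan_succ (T : ι → E →ₗ[K] E) (hf : ∀ u a, f (u ++ [a]) = T a (f u)) (ℓ : ℕ) :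
    wordSpan K f (ℓ + 1) = (K ∙ f []) ⊔ ⨆ a, (wordSpan K f ℓ).map (T a) := by
  have hwords : f '' {u | u.length < ℓ + 1} =
      insert (f []) (⋃ a, T a '' (f '' {u | u.length < ℓ})) := by
    ext y
    simp only [Set.mem_image, Set.mem_ofPred_eq, Set.mem_insert_iff, Set.mem_iUnion]
    constructor
    · rintro ⟨u, hu, rfl⟩
      rcases List.eq_nil_or_concat' u with rfl | ⟨t, a, rfl⟩
      · exact .inl rfl
      · exact .inr ⟨a, _, ⟨t, by simpa using hu, rfl⟩, (hf t a).symm⟩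
    · rintro (rfl | ⟨a, _, ⟨t, ht, rfl⟩, rfl⟩)
      · exact ⟨[], Nat.succ_pos ℓ, rfl⟩
      · exact ⟨t ++ [a], by simpa using ht, hf t a⟩
  simp only [wordSpan, hwords, span_insert, span_iUnion, span_image]

theorem wordSpan_eq_of_eq_succ (T : ι → E →ₗ[K] E) (hf : ∀ u a, f (u ++ [a]) = T a (f u))
    {ℓ : ℕ} (h : wordSpan K f ℓ = wordSpan K f (ℓ + 1)) {m : ℕ} (hm : ℓ ≤ m) :
    wordSpan K f m = wordSpan K f ℓ := by
  induction m, hm using Nat.le_induction with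
  | base => rfl
  | succ m _ ih => rw [wordSpan_succ T hf, ih, ← wordSpan_succ T hf, ← h]

theorem length_lt_finrank_of_apply_ne_zero [FiniteDimensional K E] (T : ι → E →ₗ[K] E)
    (hf : ∀ u a, f (u ++ [a]) = T a (f u)) (φ : E →ₗ[K] K) {v : List ι}
    (hshort : ∀ u : List ι, u.length < v.length → φ (f u) = 0) (hv : φ (f v) ≠ 0) :
    v.length < Module.finrank K E := by
  have hker : wordSpan K f v.length ≤ LinearMap.ker φ :=
    span_le.2 <| by rintro _ ⟨u, hu, rfl⟩; exact hshort u hu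
  have hstrict : ∀ ℓ ≤ v.length, wordSpan K f ℓ < wordSpan K f (ℓ + 1) := by
    refine fun ℓ hℓ => (wordSpan_mono ℓ.le_succ).lt_of_ne fun h => hv ?_
    have hvmem : f v ∈ wordSpan K f (v.length + 1) :=
      subset_span ⟨v, v.length.lt_succ_self, rfl⟩
    rw [wordSpan_eq_of_eq_succ T hf h (by omega : ℓ ≤ v.length + 1)] at hvmem
    exact hker (wordSpan_mono hℓ hvmem)
  have hrank : ∀ ℓ ≤ v.length + 1, ℓ ≤ Module.finrank K (wordSpan K f ℓ) := by
    intro ℓ hℓ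
    induction ℓ with
    | zero => exact Nat.zero_le _
    | succ ℓ ih =>
      exact (ih (by omega)).trans_lt (finrank_lt_finrank_of_lt (hstrict ℓ (by omega)))
  calc v.length < v.length + 1 := v.length.lt_succ_self
    _ ≤ Module.finrank K (wordSpan K f (v.length + 1)) := hrank _ le_rfl
    _ ≤ Module.finrank K E := finrank_le _

end WordSpan

theorem eq_zero_of_sum_mul_cons_eq_of_nonpos {R ι : Type*} [Ring R] [LinearOrder R]
    [IsStrictOrderedRing R] [Fintype ι] {p : ι → R} (hp : ∀ a, 0 < p a) {g : List ι → R}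
    (hg : ∀ u, ∑ a, p a * g (a :: u) = g u) (hnil : g [] = 0) {L : ℕ}
    (hle : ∀ u : List ι, u.length < L → g u ≤ 0) :
    ∀ u : List ι, u.length < L → g u = 0 := by
  intro u
  induction u with
  | nil => exact fun _ => hnil
  | cons a t ih =>
    intro hL
    have hsum : ∑ b, p b * g (b :: t) = 0 := (hg t).trans (ih (by simp at hL; omega))
    have hterm : ∀ b ∈ Finset.univ, p b * g (b :: t) ≤ 0 := fun b _ =>
      mul_nonpos_of_nonneg_of_nonpos (hp b).le (hle _ (by simpa using hL))
    exact (mul_eq_zero.1 ((Finset.sum_eq_zero_iff_of_nonpos hterm).1 hsum a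
      (Finset.mem_univ a))).resolve_left (hp a).ne'

section WordMat

variable {n k : ℕ} (δ : Fin n → Fin k → Fin n)

theorem wordMat_cons (a : Fin k) (u : List (Fin k)) :
    wordMat δ (a :: u) = wordMat δ u * letterMat δ a := by
  simp [wordMat]

theorem wordMat_append_singleton (u : List (Fin k)) (a : Fin k) :
    wordMat δ (u ++ [a]) = letterMat δ a * wordMat δ u := by
  simp [wordMat]

theorem sum_mul_dotProduct_wordMat_cons_mulVec {p : Fin k → ℝ} {α : Fin n → ℝ}
    (hα : (∑ a, p a • letterMat δ a) *ᵥ α = α) (x : Fin n → ℝ) (u : List (Fin k)) :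
    ∑ a, p a * (x ⬝ᵥ wordMat δ (a :: u) *ᵥ α) = x ⬝ᵥ wordMat δ u *ᵥ α := by
  conv_rhs => rw [← hα, sum_mulVec, mulVec_sum, dotProduct_sum]
  simp only [wordMat_cons, ← mulVec_mulVec, smul_mulVec, mulVec_smul, dotProduct_smul,
    smul_eq_mul]

end WordMat

theorem stmt7_general {n k : ℕ} (δ : Fin n → Fin k → Fin n)
    (p : Fin k → ℝ) (hp : ∀ a, 0 < p a)
    (α : Fin n → ℝ)
    (hαeig : (∑ a, p a • letterMat δ a).mulVec α = α)
    (x : Fin n → ℝ) (hx : x ⬝ᵥ α = 0)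
    (v : List (Fin k))
    (hv : 0 < (wordMat δ v)ᵀ.mulVec x ⬝ᵥ α)
    (hvmin : ∀ u : List (Fin k), 0 < (wordMat δ u)ᵀ.mulVec x ⬝ᵥ α →
      v.length ≤ u.length) :
    (∀ u : List (Fin k), u.length < v.length → (wordMat δ u)ᵀ.mulVec x ⬝ᵥ α = 0) ∧
    v.length ≤ n - 1 := by
  have htranspose : ∀ u, (wordMat δ u)ᵀ *ᵥ x ⬝ᵥ α = x ⬝ᵥ wordMat δ u *ᵥ α := fun u => by
    rw [mulVec_transpose, ← dotProduct_mulVec]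
  simp only [htranspose] at hv hvmin ⊢
  have hshort : ∀ u : List (Fin k), u.length < v.length → x ⬝ᵥ wordMat δ u *ᵥ α = 0 :=
    eq_zero_of_sum_mul_cons_eq_of_nonpos hp (sum_mul_dotProduct_wordMat_cons_mulVec δ hαeig x)
      (by simpa [wordMat] using hx) fun u hu => not_lt.1 fun hpos => (hvmin u hpos).not_gt hu
  refine ⟨hshort, ?_⟩
  have hlt := length_lt_finrank_of_apply_ne_zero (fun a => mulVecLin (letterMat δ a))
    (fun u a => by simp [wordMat_append_singleton, mulVec_mulVec])
    (dotProductBilin ℝ ℝ x) hshort hv.ne'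
  rw [Module.finrank_fin_fun] at hlt
  omega

/-- If `(x, α) = 0` and `v` is a word of minimum length with `([v]ᵀ x, α) > 0`,
then `([u]ᵀ x, α) = 0` for every shorter word `u`, and `|v| ≤ n - 1`. -/
theorem stmt7 {n k : ℕ} (δ : Fin n → Fin k → Fin n)
    (hsc : ∀ s q : Fin n, ∃ w : List (Fin k), act δ w s = q)
    (hsync : ∃ w, IsReset δ w)
    (p : Fin k → ℝ) (hp : ∀ a, 0 < p a) (hp1 : ∑ a, p a = 1)
    (α : Fin n → ℝ) (hαpos : ∀ i, 0 < α i) (hα1 : ∑ i, α i = 1)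
    (hαeig : (∑ a, p a • letterMat δ a).mulVec α = α)
    (x : Fin n → ℝ) (hx : x ⬝ᵥ α = 0)
    (v : List (Fin k))
    (hv : 0 < (wordMat δ v)ᵀ.mulVec x ⬝ᵥ α)
    (hvmin : ∀ u : List (Fin k), 0 < (wordMat δ u)ᵀ.mulVec x ⬝ᵥ α →
      v.length ≤ u.length) :
    (∀ u : List (Fin k), u.length < v.length → (wordMat δ u)ᵀ.mulVec x ⬝ᵥ α = 0) ∧
    v.length ≤ n - 1 :=
  stmt7_general δ p hp α hαeig x hx v hv hvmin
end

section
/- Let A be a strongly connected synchronizing n-state automaton, p a positive probability vector on its alphabet, and α ∈ ℚ^n the steady-state distribution of S = Σ_a p(a)[a]. If L is the least common multiple of the denominators of the components of α, then the reset length satisfies 𝔠(A) ≤ 1 + (n−1)(L−2). -/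
open Matrix

/-!
Give a set `K` of states the weight `∑ i ∈ K, α i`. Stationarity of `α` makes the weight of `K`
the `p`-average of the weights of its preimages under the letters. So if no word of length `< n`
increases the weight of a proper nonempty `K`, none changes it; and since the subspaces of vectors
whose weight is preserved by all words of length `≤ m` form a decreasing chain of nonzero
subspaces of `ℝⁿ` that stays constant once two consecutive terms agree, no word at all changes
it, contradicting that some word pulls `K` back to all states. Scaling by `L` makes all weights
integers, so each such extension gains at least `1/L`. Starting from the preimage of a state
under a letter merging two states (weight `≥ 2/L`), at most `L - 2` extensions reach weight `1`,
i.e. a reset word.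
-/

open Finset

lemma Finset.sum_lt_sum_univ_of_ne_univ {ι M : Type*} [Fintype ι] [AddCommMonoid M]
    [PartialOrder M] [IsOrderedCancelAddMonoid M] {f : ι → M} (hf : ∀ i, 0 < f i)
    {s : Finset ι} (hs : s ≠ univ) : ∑ i ∈ s, f i < ∑ i, f i := by
  obtain ⟨i, -, hi⟩ := exists_of_ssubset (ssubset_univ_iff.mpr hs)
  exact sum_lt_sum_of_subset (subset_univ s) (mem_univ i) hi (hf i) fun j _ _ => (hf j).le

lemma eq_of_sum_mul_eq_of_le {ι : Type*} [Fintype ι] {p c : ι → ℝ} {w : ℝ}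
    (hp : ∀ i, 0 < p i) (hp1 : ∑ i, p i = 1) (hle : ∀ i, c i ≤ w)
    (havg : ∑ i, p i * c i = w) (i : ι) : c i = w := by
  have hsum : ∑ i, p i * c i = ∑ i, p i * w := by rw [← Finset.sum_mul, hp1, one_mul, havg]
  have := (sum_eq_sum_iff_of_le fun i _ => mul_le_mul_of_nonneg_left (hle i) (hp i).le).mp
    hsum i (mem_univ i)
  exact mul_left_cancel₀ (hp i).ne' this

lemma Submodule.apply_finrank_sub_one_le_of_antitone {K V : Type*} [DivisionRing K]
    [AddCommGroup V] [Module K V] [FiniteDimensional K V] {f : ℕ → Submodule K V}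
    (hf : Antitone f) (hne : ∀ m, f m ≠ ⊥)
    (hpause : ∀ m, f (m + 1) = f m → f (m + 2) = f (m + 1)) (m : ℕ) :
    f (Module.finrank K V - 1) ≤ f m := by
  set N := Module.finrank K V
  have hdim : ∀ m, (∀ j < m, f (j + 1) ≠ f j) → Module.finrank K (f m) + m ≤ N := by
    intro m
    induction m with
    | zero => intro _; simpa using Submodule.finrank_le (f 0)
    | succ m ih =>
      intro h
      have hlt := Submodule.finrank_lt_finrank_of_lt
        (lt_of_le_of_ne (hf (by omega : m ≤ m + 1)) (h m (by omega)))
      have := ih fun j hj => h j (by omega)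
      omega
  obtain ⟨m₀, hm₀, hstop⟩ : ∃ m₀ < N, f (m₀ + 1) = f m₀ := by
    by_contra! h
    have := hdim N h
    exact hne N (Submodule.finrank_eq_zero.mp (by omega))
  have hsucc : ∀ m, m₀ ≤ m → f (m + 1) = f m :=
    Nat.le_induction hstop fun m _ ih => hpause m ih
  have hconst : ∀ m, m₀ ≤ m → f m = f m₀ :=
    Nat.le_induction rfl fun m hm ih => (hsucc m hm).trans ih
  rcases le_total m (N - 1) with h | h
  · exact hf h
  · rw [hconst m (by omega), hconst (N - 1) (by omega)]

lemma Rat.exists_nat_eq_mul_of_den_dvd {q : ℚ} (hq : 0 < q) {L : ℕ} (hL : q.den ∣ L)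
    (hL0 : L ≠ 0) :
    ∃ m : ℕ, 0 < m ∧ (m : ℚ) = L * q := by
  obtain ⟨c, rfl⟩ := hL
  have hc : 0 < c := Nat.pos_of_ne_zero (right_ne_zero_of_mul hL0)
  have hnum : 0 < q.num := Rat.num_pos.mpr hq
  have hcast : ((q.num.toNat : ℕ) : ℚ) = q.num := by exact_mod_cast Int.toNat_of_nonneg hnum.le
  refine ⟨c * q.num.toNat, Nat.mul_pos hc (by omega), ?_⟩
  push_cast
  rw [hcast, ← Rat.mul_den_eq_num]
  ring

namespace Synchronizing

variable {n k : ℕ} (δ : Fin n → Fin k → Fin n)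

lemma act_append (u v : List (Fin k)) (q : Fin n) :
    act δ (u ++ v) q = act δ v (act δ u q) := List.foldl_append

lemma comp_act_concat (y : Fin n → ℝ) (a : Fin k) (u : List (Fin k)) :
    y ∘ act δ (u ++ [a]) = (y ∘ act δ [a]) ∘ act δ u := by
  funext q; simp [act_append]

def wordPreimage (u : List (Fin k)) (K : Finset (Fin n)) : Finset (Fin n) :=
  {q | act δ u q ∈ K}

@[simp]
lemma mem_wordPreimage {u : List (Fin k)} {K : Finset (Fin n)} {q : Fin n} :
    q ∈ wordPreimage δ u K ↔ act δ u q ∈ K := by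
  simp [wordPreimage]

@[simp]
lemma wordPreimage_nil (K : Finset (Fin n)) : wordPreimage δ [] K = K := by
  ext q; simp [act]

lemma wordPreimage_wordPreimage (u v : List (Fin k)) (K : Finset (Fin n)) :
    wordPreimage δ u (wordPreimage δ v K) = wordPreimage δ (u ++ v) K := by
  ext q; simp [act_append]

lemma isReset_of_wordPreimage_eq_univ {u : List (Fin k)} {s : Fin n}
    (h : wordPreimage δ u {s} = univ) : IsReset δ u := by
  intro q₁ q₂
  have h₁ : act δ u q₁ = s := by simpa using h.ge (mem_univ q₁)
  have h₂ : act δ u q₂ = s := by simpa using h.ge (mem_univ q₂)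
  rw [h₁, h₂]

lemma exists_wordPreimage_eq_univ (hsc : ∀ s q : Fin n, ∃ w : List (Fin k), act δ w s = q)
    (hsync : ∃ w, IsReset δ w) {K : Finset (Fin n)} (hK : K.Nonempty) :
    ∃ u : List (Fin k), wordPreimage δ u K = univ := by
  obtain ⟨w, hw⟩ := hsync
  obtain ⟨s, hs⟩ := hK
  obtain ⟨v, hv⟩ := hsc (act δ w s) s
  refine ⟨w ++ v, eq_univ_of_forall fun q => ?_⟩
  rw [mem_wordPreimage, act_append, hw q s, hv]
  exact hs

lemma exists_merging_letter (hn : 2 ≤ n) (hsync : ∃ w, IsReset δ w) :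
    ∃ (a : Fin k) (q₁ q₂ : Fin n), q₁ ≠ q₂ ∧ δ q₁ a = δ q₂ a := by
  by_contra! hinj
  have hact : ∀ w : List (Fin k), Function.Injective (act δ w) := by
    intro w
    induction w with
    | nil => exact fun _ _ h => h
    | cons a v ih => exact fun x y h => by_contra fun hxy => hinj a x y hxy (ih h)
  obtain ⟨w, hw⟩ := hsync
  have := hact w (hw ⟨0, by omega⟩ ⟨1, by omega⟩)
  simp [Fin.ext_iff] at this

section Stationary

variable {δ} {α : Fin n → ℝ} {p : Fin k → ℝ}

lemma letterMat_mulVec_dotProduct (a : Fin k) (α y : Fin n → ℝ) :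
    letterMat δ a *ᵥ α ⬝ᵥ y = α ⬝ᵥ (y ∘ act δ [a]) := by
  simp only [dotProduct, mulVec, letterMat, Finset.sum_mul, ite_mul, one_mul, zero_mul,
    Function.comp_apply, act, List.foldl_cons, List.foldl_nil]
  rw [Finset.sum_comm]
  simp

lemma sum_mul_dotProduct_comp_act_singleton (hα : (∑ a, p a • letterMat δ a) *ᵥ α = α)
    (y : Fin n → ℝ) : ∑ a, p a * α ⬝ᵥ (y ∘ act δ [a]) = α ⬝ᵥ y := by
  conv_rhs => rw [← hα]
  simp only [sum_mulVec, smul_mulVec, sum_dotProduct, smul_dotProduct,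
    letterMat_mulVec_dotProduct, smul_eq_mul]

lemma dotProduct_comp_act_eq_of_le (hp : ∀ a, 0 < p a) (hp1 : ∑ a, p a = 1)
    (hα : (∑ a, p a • letterMat δ a) *ᵥ α = α) {y : Fin n → ℝ} {N : ℕ}
    (hle : ∀ u : List (Fin k), u.length ≤ N → α ⬝ᵥ (y ∘ act δ u) ≤ α ⬝ᵥ y) :
    ∀ u : List (Fin k), u.length ≤ N → α ⬝ᵥ (y ∘ act δ u) = α ⬝ᵥ y := by
  intro u
  induction u with
  | nil => intro _; rfl
  | cons a v ih =>
    intro hu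
    have hv : α ⬝ᵥ (y ∘ act δ v) = α ⬝ᵥ y := ih (by simp at hu; omega)
    refine eq_of_sum_mul_eq_of_le hp hp1 (fun b => hle (b :: v) (by simpa using hu)) ?_ a
    rw [← hv]
    exact sum_mul_dotProduct_comp_act_singleton hα (y ∘ act δ v)

end Stationary

section WeightInvariant

variable (α : Fin n → ℝ)

def weightInvariant (m : ℕ) : Submodule ℝ (Fin n → ℝ) where
  carrier := {y | ∀ u : List (Fin k), u.length ≤ m → α ⬝ᵥ (y ∘ act δ u) = α ⬝ᵥ y}
  zero_mem' := by intro u _; rfl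
  add_mem' := by
    intro y z hy hz u hu
    simp only [Pi.add_comp, dotProduct_add, hy u hu, hz u hu]
  smul_mem' := by
    intro c y hy u hu
    simp only [Pi.smul_comp, dotProduct_smul, hy u hu]

variable {δ α}

lemma mem_weightInvariant {m : ℕ} {y : Fin n → ℝ} :
    y ∈ weightInvariant δ α m ↔
      ∀ u : List (Fin k), u.length ≤ m → α ⬝ᵥ (y ∘ act δ u) = α ⬝ᵥ y :=
  Iff.rfl

lemma mem_weightInvariant_succ {m : ℕ} {y : Fin n → ℝ} :
    y ∈ weightInvariant δ α (m + 1) ↔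
      ∀ a, α ⬝ᵥ (y ∘ act δ [a]) = α ⬝ᵥ y ∧ y ∘ act δ [a] ∈ weightInvariant δ α m := by
  simp only [mem_weightInvariant]
  constructor
  · intro hy a
    refine ⟨hy [a] (by simp), fun v hv => ?_⟩
    rw [← comp_act_concat, hy (v ++ [a]) (by simpa using hv), hy [a] (by simp)]
  · intro hy u hu
    rcases u.eq_nil_or_concat' with rfl | ⟨v, a, rfl⟩
    · rfl
    · rw [comp_act_concat, (hy a).2 v (by simp at hu; omega), (hy a).1]

variable (δ α)

lemma weightInvariant_antitone : Antitone (weightInvariant δ α) :=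
  fun _ _ h _ hy u hu => hy u (hu.trans h)

lemma weightInvariant_ne_bot (hn : 0 < n) (m : ℕ) : weightInvariant δ α m ≠ ⊥ := by
  have hone : (fun _ => 1 : Fin n → ℝ) ∈ weightInvariant δ α m := fun _ _ => rfl
  intro hbot
  rw [hbot, Submodule.mem_bot] at hone
  exact one_ne_zero (congrFun hone ⟨0, hn⟩)

lemma weightInvariant_succ_succ {m : ℕ}
    (h : weightInvariant δ α (m + 1) = weightInvariant δ α m) :
    weightInvariant δ α (m + 2) = weightInvariant δ α (m + 1) := by
  ext y
  rw [mem_weightInvariant_succ, mem_weightInvariant_succ, h]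

lemma weightInvariant_sub_one_le (hn : 0 < n) (m : ℕ) :
    weightInvariant δ α (n - 1) ≤ weightInvariant δ α m := by
  have := Submodule.apply_finrank_sub_one_le_of_antitone (weightInvariant_antitone δ α)
    (weightInvariant_ne_bot δ α hn) (fun _ => weightInvariant_succ_succ δ α) m
  rwa [Module.finrank_fin_fun] at this

end WeightInvariant

lemma dotProduct_indicator_comp_act (α : Fin n → ℝ) (K : Finset (Fin n)) (u : List (Fin k)) :
    α ⬝ᵥ ((fun i => if i ∈ K then 1 else 0) ∘ act δ u) = ∑ i ∈ wordPreimage δ u K, α i := by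
  simp [dotProduct, wordPreimage, Finset.sum_filter]

theorem exists_sum_lt_sum_wordPreimage {α : Fin n → ℝ} {p : Fin k → ℝ}
    (hp : ∀ a, 0 < p a) (hp1 : ∑ a, p a = 1) (hα : (∑ a, p a • letterMat δ a) *ᵥ α = α)
    (hαpos : ∀ i, 0 < α i) (hsc : ∀ s q : Fin n, ∃ w : List (Fin k), act δ w s = q)
    (hsync : ∃ w, IsReset δ w) {K : Finset (Fin n)} (hK : K.Nonempty) (hKu : K ≠ univ) :
    ∃ u : List (Fin k), u.length ≤ n - 1 ∧ ∑ i ∈ K, α i < ∑ i ∈ wordPreimage δ u K, α i := by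
  by_contra! hle
  set χ : Fin n → ℝ := fun i => if i ∈ K then 1 else 0
  have hχ := dotProduct_indicator_comp_act δ α K
  have hχK : α ⬝ᵥ χ = ∑ i ∈ K, α i := (hχ []).trans (by rw [wordPreimage_nil])
  have hmem : χ ∈ weightInvariant δ α (n - 1) :=
    dotProduct_comp_act_eq_of_le hp hp1 hα fun u hu => by rw [hχ, hχK]; exact hle u hu
  obtain ⟨u, hu⟩ := exists_wordPreimage_eq_univ δ hsc hsync hK
  have heq := weightInvariant_sub_one_le δ α hK.choose.pos u.length hmem u le_rfl
  rw [hχ, hχK, hu] at heq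
  exact (sum_lt_sum_univ_of_ne_univ hαpos hKu).ne' heq

lemma exists_wordPreimage_eq_univ_of_sum_le (m : Fin n → ℕ) (hm : ∀ i, 0 < m i)
    (hext : ∀ K : Finset (Fin n), K.Nonempty → K ≠ univ →
      ∃ v : List (Fin k), v.length ≤ n - 1 ∧ ∑ i ∈ K, m i < ∑ i ∈ wordPreimage δ v K, m i)
    (j : ℕ) {K : Finset (Fin n)} (hK : K.Nonempty) (hj : ∑ i, m i ≤ ∑ i ∈ K, m i + j) :
    ∃ u : List (Fin k), u.length ≤ (n - 1) * j ∧ wordPreimage δ u K = univ := by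
  induction j generalizing K with
  | zero =>
    refine ⟨[], by simp, ?_⟩
    by_contra hKu
    rw [wordPreimage_nil] at hKu
    have := sum_lt_sum_univ_of_ne_univ hm hKu
    omega
  | succ j ih =>
    by_cases hKu : K = univ
    · exact ⟨[], by simp, by simp [hKu]⟩
    obtain ⟨v, hv, hlt⟩ := hext K hK hKu
    have hK' : (wordPreimage δ v K).Nonempty := nonempty_of_sum_ne_zero (f := m) (by omega)
    obtain ⟨u, hu, huniv⟩ := ih (K := wordPreimage δ v K) hK' (by omega)
    refine ⟨u ++ v, ?_, by rw [← wordPreimage_wordPreimage, huniv]⟩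
    rw [List.length_append, Nat.mul_succ]
    omega

lemma exists_isReset_length_le_of_sum (hn : 2 ≤ n) (hsync : ∃ w, IsReset δ w)
    (m : Fin n → ℕ) (hm : ∀ i, 0 < m i)
    (hext : ∀ K : Finset (Fin n), K.Nonempty → K ≠ univ →
      ∃ v : List (Fin k), v.length ≤ n - 1 ∧ ∑ i ∈ K, m i < ∑ i ∈ wordPreimage δ v K, m i) :
    ∃ w : List (Fin k), IsReset δ w ∧ w.length ≤ 1 + (n - 1) * (∑ i, m i - 2) := by
  obtain ⟨a, q₁, q₂, hne, hq⟩ := exists_merging_letter δ hn hsync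
  set K := wordPreimage δ [a] {δ q₁ a}
  have hsub : {q₁, q₂} ⊆ K := by
    intro q hq'
    rcases mem_insert.mp hq' with rfl | hq'
    · simp [K, act]
    · simp [K, act, mem_singleton.mp hq', hq]
  have hK : 2 ≤ ∑ i ∈ K, m i := by
    have := sum_le_sum_of_subset (f := m) hsub
    rw [sum_pair hne] at this
    have := hm q₁; have := hm q₂
    omega
  obtain ⟨u, hu, huniv⟩ := exists_wordPreimage_eq_univ_of_sum_le δ m hm hext (∑ i, m i - 2)
    ⟨q₁, hsub (by simp)⟩ (by omega)
  rw [wordPreimage_wordPreimage] at huniv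
  refine ⟨u ++ [a], isReset_of_wordPreimage_eq_univ δ huniv, ?_⟩
  rw [List.length_append, List.length_singleton]
  omega

lemma exists_nat_weights {α : Fin n → ℝ} (hαpos : ∀ i, 0 < α i) (hα1 : ∑ i, α i = 1)
    (αq : Fin n → ℚ) (hrat : ∀ i, α i = (αq i : ℝ)) :
    ∃ m : Fin n → ℕ, (∀ i, 0 < m i) ∧ ∑ i, m i = univ.lcm (fun i => (αq i).den) ∧
      ∀ s : Finset (Fin n),
        ((∑ i ∈ s, m i : ℕ) : ℝ) = univ.lcm (fun i => (αq i).den) * ∑ i ∈ s, α i := by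
  set L := univ.lcm (fun i => (αq i).den)
  have hL0 : L ≠ 0 := by simp [L, Finset.lcm_eq_zero_iff]
  have hαq : ∀ i, 0 < αq i := fun i => by exact_mod_cast (hrat i) ▸ hαpos i
  choose m hm hmα using fun i =>
    Rat.exists_nat_eq_mul_of_den_dvd (L := L) (hαq i) (dvd_lcm (mem_univ i)) hL0
  have hsum : ∀ s : Finset (Fin n), ((∑ i ∈ s, m i : ℕ) : ℝ) = L * ∑ i ∈ s, α i := by
    intro s
    push_cast
    rw [mul_sum]
    refine sum_congr rfl fun i _ => ?_
    rw [hrat]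
    exact_mod_cast hmα i
  have htotal := hsum univ
  rw [hα1, mul_one] at htotal
  exact ⟨m, hm, by exact_mod_cast htotal, hsum⟩

end Synchronizing

open Synchronizing in
/-- If the steady-state distribution `α` of `S = Σ_a p(a)[a]` has rational
entries and `L` is the lcm of their denominators, then the reset length is at
most `1 + (n-1)(L-2)`. -/
theorem stmt8 {n k : ℕ} (hn : 2 ≤ n) (δ : Fin n → Fin k → Fin n)
    (hsc : ∀ s q : Fin n, ∃ w : List (Fin k), act δ w s = q)
    (hsync : ∃ w, IsReset δ w)
    (p : Fin k → ℝ) (hp : ∀ a, 0 < p a) (hp1 : ∑ a, p a = 1)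
    (α : Fin n → ℝ) (hαpos : ∀ i, 0 < α i) (hα1 : ∑ i, α i = 1)
    (hαeig : (∑ a, p a • letterMat δ a).mulVec α = α)
    (αq : Fin n → ℚ) (hrat : ∀ i, α i = (αq i : ℝ))
    (L : ℕ) (hL : L = Finset.univ.lcm (fun i : Fin n => (αq i).den))
    (r : ℕ)
    (hr : IsLeast {t : ℕ | ∃ w : List (Fin k), IsReset δ w ∧ w.length = t} r) :
    r ≤ 1 + (n - 1) * (L - 2) := by
  obtain ⟨m, hm, hmL, hmα⟩ := exists_nat_weights hαpos hα1 αq hrat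
  rw [← hL] at hmL hmα
  have hL0 : (0 : ℝ) < L := by
    rw [← hmL]
    exact_mod_cast sum_pos (fun i _ => hm i) ⟨⟨0, by omega⟩, mem_univ _⟩
  have hext : ∀ K : Finset (Fin n), K.Nonempty → K ≠ univ →
      ∃ v : List (Fin k), v.length ≤ n - 1 ∧ ∑ i ∈ K, m i < ∑ i ∈ wordPreimage δ v K, m i := by
    intro K hK hKu
    obtain ⟨v, hv, hlt⟩ := exists_sum_lt_sum_wordPreimage δ hp hp1 hαeig hαpos hsc hsync hK hKu
    have := mul_lt_mul_of_pos_left hlt hL0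
    rw [← hmα, ← hmα] at this
    exact ⟨v, hv, by exact_mod_cast this⟩
  obtain ⟨w, hw, hlen⟩ := exists_isReset_length_le_of_sum δ hn hsync m hm hext
  rw [hmL] at hlen
  exact (hr.2 ⟨w, hw, rfl⟩).trans hlen
end

section
/- If A is an Eulerian (or pseudo-Eulerian) strongly connected synchronizing n-state automaton, then 𝔠(A) ≤ 1 + (n−1)(n−2). -/
open Matrix

/-! Fix `p > 0` making `S = Σ_a p(a)[a]` doubly stochastic. For a set `C` of states, the
`p`-weighted mean of `#((a u)⁻¹ C)` over the letters `a` is `#(u⁻¹ C)`; so if no word of length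
`< n` enlarges `C`, all of them preserve `#C`. Then the coordinate sum kills the centred
indicators `1_{u⁻¹ C} - #C / n` of all short words, and as these span the centred indicators of
all words (their spans stabilise in dimension `n`), every word preserves `#C`. A word sending
everything into `C` contradicts this when `0 < #C < n`. Hence every fibre of size `< n` grows
under some word of length `≤ n - 1`, and starting from a letter that merges two states, `n - 2`
such extensions give a reset word of length `≤ 1 + (n - 2)(n - 1)`. -/

open Finset

section WordOrbit

variable {K V ι : Type*} [Field K] [AddCommGroup V] [Module K V]
  (f : ι → Module.End K V) (v : V)

def wordOrbitSpan (t : ℕ) : Submodule K V :=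
  Submodule.span K ((fun u : List ι => (u.map f).prod v) '' {u | u.length < t})

variable {f v}

lemma prod_map_apply_mem_wordOrbitSpan {t : ℕ} {u : List ι} (hu : u.length < t) :
    (u.map f).prod v ∈ wordOrbitSpan f v t :=
  Submodule.subset_span ⟨u, hu, rfl⟩

lemma wordOrbitSpan_mono : Monotone (wordOrbitSpan f v) := fun _ _ hst =>
  Submodule.span_mono (Set.image_mono fun _ hu => lt_of_lt_of_le hu hst)

lemma map_wordOrbitSpan_le (a : ι) (t : ℕ) :
    (wordOrbitSpan f v t).map (f a) ≤ wordOrbitSpan f v (t + 1) := by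
  rw [wordOrbitSpan, Submodule.map_span, Submodule.span_le]
  rintro _ ⟨_, ⟨u, hu, rfl⟩, rfl⟩
  exact prod_map_apply_mem_wordOrbitSpan (u := a :: u) (by simpa using hu)

lemma prod_map_apply_mem_wordOrbitSpan_of_succ_le {t : ℕ}
    (hstab : wordOrbitSpan f v (t + 1) ≤ wordOrbitSpan f v t) (u : List ι) :
    (u.map f).prod v ∈ wordOrbitSpan f v t := by
  induction u with
  | nil => exact hstab (prod_map_apply_mem_wordOrbitSpan (u := []) t.succ_pos)
  | cons a u ih =>
    simpa using hstab (map_wordOrbitSpan_le a t ⟨_, ih, rfl⟩)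

variable [FiniteDimensional K V]

lemma exists_wordOrbitSpan_succ_le :
    ∃ t ≤ Module.finrank K V, wordOrbitSpan f v (t + 1) ≤ wordOrbitSpan f v t := by
  by_contra! hgrow
  have hrank : ∀ t ≤ Module.finrank K V + 1, t ≤ Module.finrank K (wordOrbitSpan f v t) := by
    intro t
    induction t with
    | zero => simp
    | succ t ih =>
      intro ht
      have hlt : wordOrbitSpan f v t < wordOrbitSpan f v (t + 1) :=
        lt_of_le_not_ge (wordOrbitSpan_mono t.le_succ) (hgrow t (by omega))
      have hrank_lt := Submodule.finrank_lt_finrank_of_lt hlt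
      have hrank_ge := ih (by omega)
      omega
  have hbig := hrank _ le_rfl
  have hsmall := Submodule.finrank_le (wordOrbitSpan f v (Module.finrank K V + 1))
  omega

theorem prod_map_apply_mem_wordOrbitSpan_finrank (u : List ι) :
    (u.map f).prod v ∈ wordOrbitSpan f v (Module.finrank K V) := by
  obtain ⟨t, ht, hstab⟩ := exists_wordOrbitSpan_succ_le (f := f) (v := v)
  exact wordOrbitSpan_mono ht (prod_map_apply_mem_wordOrbitSpan_of_succ_le hstab u)

end WordOrbit

section Automaton

variable {n k : ℕ} (δ : Fin n → Fin k → Fin n)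

@[simp] lemma act_nil (q : Fin n) : act δ [] q = q := rfl

@[simp] lemma act_cons (a : Fin k) (u : List (Fin k)) (q : Fin n) :
    act δ (a :: u) q = act δ u (δ q a) := rfl

lemma act_append (u v : List (Fin k)) (q : Fin n) :
    act δ (u ++ v) q = act δ v (act δ u q) := by
  simp [act, List.foldl_append]

def wordPreimage (u : List (Fin k)) (C : Finset (Fin n)) : Finset (Fin n) :=
  univ.filter fun q => act δ u q ∈ C

@[simp] lemma wordPreimage_nil (C : Finset (Fin n)) : wordPreimage δ [] C = C := by
  ext q
  simp only [wordPreimage, mem_filter]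
  simp

lemma wordPreimage_append (u v : List (Fin k)) (C : Finset (Fin n)) :
    wordPreimage δ (u ++ v) C = wordPreimage δ u (wordPreimage δ v C) := by
  ext q
  simp [wordPreimage, act_append]

lemma isReset_of_wordPreimage_eq_univ {w : List (Fin k)} {c : Fin n}
    (hw : wordPreimage δ w {c} = univ) : IsReset δ w := by
  have hc : ∀ q, act δ w q = c := fun q => by
    have hq : q ∈ wordPreimage δ w {c} := hw ▸ mem_univ q
    simpa [wordPreimage] using hq
  exact fun p q => (hc p).trans (hc q).symm

lemma exists_letter_merge {w : List (Fin k)} {p q : Fin n} (hpq : p ≠ q)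
    (hw : act δ w p = act δ w q) : ∃ (a : Fin k) (r s : Fin n), r ≠ s ∧ δ r a = δ s a := by
  induction w generalizing p q with
  | nil => exact absurd hw hpq
  | cons a w ih =>
    by_cases hmerge : δ p a = δ q a
    · exact ⟨a, p, q, hpq, hmerge⟩
    · exact ih hmerge hw

end Automaton

section PreimageCard

variable {n k : ℕ} {δ : Fin n → Fin k → Fin n}

lemma prod_map_funLeft_apply (x : Fin n → ℝ) (u : List (Fin k)) :
    (u.map fun a => LinearMap.funLeft ℝ ℝ (δ · a)).prod x = x ∘ act δ u := by
  induction u with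
  | nil => rfl
  | cons a u ih =>
    ext q
    simp [ih, LinearMap.funLeft_apply]

lemma card_wordPreimage_eq_of_forall_length_lt {C : Finset (Fin n)}
    (hshort : ∀ u : List (Fin k), u.length < n → #(wordPreimage δ u C) = #C)
    (u : List (Fin k)) : #(wordPreimage δ u C) = #C := by
  rcases Nat.eq_zero_or_pos n with rfl | hn
  · simp [Subsingleton.elim C ∅, wordPreimage]
  -- Centering the indicator of `C` turns "`#(wordPreimage δ u C) = #C`" into a linear condition.
  let x : Fin n → ℝ := fun q => (if q ∈ C then 1 else 0) - #C / n
  let φ : (Fin n → ℝ) →ₗ[ℝ] ℝ := ∑ q, LinearMap.proj q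
  have hφ (u : List (Fin k)) : φ (x ∘ act δ u) = #(wordPreimage δ u C) - #C := by
    simp only [φ, x, LinearMap.coe_sum, LinearMap.coe_proj, Finset.sum_apply, Function.eval,
      Function.comp_apply, sum_sub_distrib, sum_boole, sum_const, card_univ, Fintype.card_fin,
      nsmul_eq_mul, wordPreimage, sub_right_inj]
    field_simp
  have hker : wordOrbitSpan (fun a => LinearMap.funLeft ℝ ℝ (δ · a)) x n ≤ LinearMap.ker φ := by
    rw [wordOrbitSpan, Submodule.span_le]
    rintro _ ⟨u, hu, rfl⟩
    simp [prod_map_funLeft_apply, hφ, hshort u hu]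
  have hu := hker (by
    simpa using prod_map_apply_mem_wordOrbitSpan_finrank
      (f := fun a => LinearMap.funLeft ℝ ℝ (δ · a)) (v := x) u)
  rw [LinearMap.mem_ker, prod_map_funLeft_apply, hφ, sub_eq_zero] at hu
  exact_mod_cast hu

variable {p : Fin k → ℝ}

lemma sum_mul_card_wordPreimage_singleton
    (hrow : ∀ i, ∑ j, (∑ a, p a • letterMat δ a) i j = 1) (D : Finset (Fin n)) :
    ∑ a, p a * #(wordPreimage δ [a] D) = #D := by
  have hS (i j : Fin n) :
      (∑ a, p a • letterMat δ a) i j = ∑ a, p a * if δ j a = i then 1 else 0 := by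
    simp [letterMat, Matrix.sum_apply]
  calc ∑ a, p a * #(wordPreimage δ [a] D)
      = ∑ a, ∑ j, ∑ i ∈ D, p a * if δ j a = i then 1 else 0 := by
        refine Finset.sum_congr rfl fun a _ => ?_
        rw [wordPreimage, natCast_card_filter, Finset.mul_sum]
        refine Finset.sum_congr rfl fun j _ => ?_
        by_cases h : δ j a ∈ D <;> simp [h]
    _ = ∑ j, ∑ i ∈ D, ∑ a, p a * if δ j a = i then 1 else 0 := by
        rw [Finset.sum_comm]
        exact Finset.sum_congr rfl fun _ _ => Finset.sum_comm
    _ = ∑ i ∈ D, ∑ j, (∑ a, p a • letterMat δ a) i j := by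
        rw [Finset.sum_comm]
        simp only [hS]
    _ = #D := by simp [hrow]

lemma card_wordPreimage_eq_of_forall_le (hp : ∀ a, 0 < p a) (hp1 : ∑ a, p a = 1)
    (hrow : ∀ i, ∑ j, (∑ a, p a • letterMat δ a) i j = 1) {C : Finset (Fin n)} {L : ℕ}
    (hle : ∀ u : List (Fin k), u.length < L → #(wordPreimage δ u C) ≤ #C) :
    ∀ u : List (Fin k), u.length < L → #(wordPreimage δ u C) = #C := by
  intro u
  induction u with
  | nil => simp
  | cons a u ih =>
    intro hu
    have hcons (b : Fin k) : wordPreimage δ (b :: u) C = wordPreimage δ [b] (wordPreimage δ u C) :=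
      wordPreimage_append δ [b] u C
    have hmean : ∑ b, p b * #(wordPreimage δ (b :: u) C) = ∑ b, p b * #C := by
      simp only [hcons, sum_mul_card_wordPreimage_singleton hrow, ← Finset.sum_mul, hp1, one_mul]
      exact_mod_cast ih (by simp only [List.length_cons] at hu; omega)
    have hterm := (Finset.sum_eq_sum_iff_of_le fun b _ => mul_le_mul_of_nonneg_left
      (by exact_mod_cast hle (b :: u) (by simpa using hu)) (hp b).le).1 hmean a (mem_univ a)
    exact_mod_cast mul_left_cancel₀ (hp a).ne' hterm

theorem exists_length_lt_card_lt_card_wordPreimage (hp : ∀ a, 0 < p a) (hp1 : ∑ a, p a = 1)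
    (hrow : ∀ i, ∑ j, (∑ a, p a • letterMat δ a) i j = 1) {C : Finset (Fin n)} {w : List (Fin k)}
    (hw : #(wordPreimage δ w C) ≠ #C) :
    ∃ u : List (Fin k), u.length < n ∧ #C < #(wordPreimage δ u C) := by
  by_contra! hle
  exact hw (card_wordPreimage_eq_of_forall_length_lt
    (card_wordPreimage_eq_of_forall_le hp hp1 hrow hle) w)

end PreimageCard

section Synchronizing

variable {n k : ℕ} {δ : Fin n → Fin k → Fin n}

lemma exists_wordPreimage_eq_univ (hsc : ∀ s q : Fin n, ∃ w : List (Fin k), act δ w s = q)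
    (hsync : ∃ w, IsReset δ w) {C : Finset (Fin n)} (hC : C.Nonempty) :
    ∃ w, wordPreimage δ w C = univ := by
  obtain ⟨w, hw⟩ := hsync
  obtain ⟨c, hc⟩ := hC
  obtain ⟨v, hv⟩ := hsc (act δ w c) c
  refine ⟨w ++ v, eq_univ_of_forall fun q => ?_⟩
  simp only [wordPreimage, mem_filter]
  simp [act_append, hw q c, hv, hc]

theorem exists_word_card_wordPreimage_singleton_ge (hn : 2 ≤ n)
    (hsc : ∀ s q : Fin n, ∃ w : List (Fin k), act δ w s = q) (hsync : ∃ w, IsReset δ w)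
    {p : Fin k → ℝ} (hp : ∀ a, 0 < p a) (hp1 : ∑ a, p a = 1)
    (hrow : ∀ i, ∑ j, (∑ a, p a • letterMat δ a) i j = 1) {m : ℕ} (hm : m ≤ n - 2) :
    ∃ (v : List (Fin k)) (c : Fin n),
      v.length ≤ 1 + m * (n - 1) ∧ m + 2 ≤ #(wordPreimage δ v {c}) := by
  induction m with
  | zero =>
    obtain ⟨w, hw⟩ := hsync
    obtain ⟨a, r, s, hrs, hmerge⟩ := exists_letter_merge δ (p := ⟨0, by omega⟩)
      (q := ⟨1, by omega⟩) (by simp) (hw _ _)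
    refine ⟨[a], δ r a, by simp, ?_⟩
    calc 0 + 2 = #{r, s} := (card_pair hrs).symm
      _ ≤ #(wordPreimage δ [a] {δ r a}) := card_le_card fun x hx => by
        simp only [wordPreimage, mem_filter]
        rcases mem_insert.1 hx with rfl | hx
        · simp
        · simp [mem_singleton.1 hx, hmerge]
  | succ m ih =>
    obtain ⟨v, c, hlen, hcard⟩ := ih (by omega)
    have hB := card_le_univ (wordPreimage δ v {c})
    rw [Fintype.card_fin] at hB
    rcases hB.lt_or_eq with hB | hB
    · obtain ⟨w, hw⟩ := exists_wordPreimage_eq_univ hsc hsync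
        (card_pos.1 (by omega : 0 < #(wordPreimage δ v {c})))
      obtain ⟨u, hu, hgrow⟩ := exists_length_lt_card_lt_card_wordPreimage hp hp1 hrow
        (w := w) (by rw [hw, card_univ, Fintype.card_fin]; omega)
      refine ⟨u ++ v, c, ?_, ?_⟩
      · rw [List.length_append, Nat.succ_mul]
        omega
      · rw [wordPreimage_append]
        omega
    · exact ⟨v, c, by rw [Nat.succ_mul]; omega, by omega⟩

end Synchronizing

/-- If `A` is Eulerian or pseudo-Eulerian (some positive probability vector `p`
makes `S = Σ_a p(a)[a]` doubly stochastic), then the reset length is at most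
`1 + (n-1)(n-2)`. -/
theorem stmt9 {n k : ℕ} (hn : 2 ≤ n) (δ : Fin n → Fin k → Fin n)
    (hsc : ∀ s q : Fin n, ∃ w : List (Fin k), act δ w s = q)
    (hsync : ∃ w, IsReset δ w)
    (hpe : ∃ p : Fin k → ℝ, (∀ a, 0 < p a) ∧ (∑ a, p a = 1) ∧
      (∀ j, ∑ i, (∑ a, p a • letterMat δ a) i j = 1) ∧
      (∀ i, ∑ j, (∑ a, p a • letterMat δ a) i j = 1))
    (r : ℕ)
    (hr : IsLeast {t : ℕ | ∃ w : List (Fin k), IsReset δ w ∧ w.length = t} r) :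
    r ≤ 1 + (n - 1) * (n - 2) := by
  obtain ⟨p, hp, hp1, -, hrow⟩ := hpe
  obtain ⟨v, c, hlen, hcard⟩ :=
    exists_word_card_wordPreimage_singleton_ge hn hsc hsync hp hp1 hrow (m := n - 2) le_rfl
  have hv : wordPreimage δ v {c} = univ :=
    eq_univ_of_card _ (le_antisymm (card_le_univ _) (by rw [Fintype.card_fin]; omega))
  calc r ≤ v.length := hr.2 ⟨v, isReset_of_wordPreimage_eq_univ δ hv, rfl⟩
    _ ≤ 1 + (n - 2) * (n - 1) := hlen
    _ = 1 + (n - 1) * (n - 2) := by rw [Nat.mul_comm]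
end
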